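/- arXiv:1712.00992 — 8 statements merged into one kernel-verified Lean document; each statement's English description precedes it below -/
import Mathlib

section
/- If the r-fold graph G = (V, E_1, …, E_r) percolates, then for every nonempty subset of colours {j_1 < j_2 < … < j_s} ⊆ {1, …, r}, the s-fold graph (V, E_{j_1}, …, E_{j_s}) percolates. In particular, if G percolates then each graph (V, E_i) is connected. -/
open MeasureTheory Filter

noncomputable section

namespace Jigsaw

variable {V : Type*} {r : ℕ}

/-- The auxiliary relation between clusters of the current partition `P`:
two distinct clusters of `P` are related if for every colour there is an edge of that
colour with one endpoint in each cluster. -/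
def AuxRel (E : Fin r → Set (Sym2 V)) (P : Set (Set V)) (C C' : Set V) : Prop :=
  C ∈ P ∧ C' ∈ P ∧ C ≠ C' ∧ ∀ i : Fin r, ∃ u ∈ C, ∃ v ∈ C', s(u, v) ∈ E i

/-- One step of the jigsaw process: merge the connected components of the auxiliary graph. -/
def nextPart (E : Fin r → Set (Sym2 V)) (P : Set (Set V)) : Set (Set V) :=
  {S | ∃ C ∈ P, S = ⋃₀ {C' | Relation.ReflTransGen (AuxRel E P) C C'}}

/-- The set `W` percolates: starting from singleton clusters of the vertices of `W`,
iterating the jigsaw process eventually yields the single cluster `W`. -/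
def PercolatesOn (E : Fin r → Set (Sym2 V)) (W : Set V) : Prop :=
  ∃ t : ℕ, (nextPart E)^[t] {S | ∃ v ∈ W, S = {v}} = {W}

/-- The `r`-fold graph with edge sets `E` percolates. -/
def Percolates (E : Fin r → Set (Sym2 V)) : Prop :=
  PercolatesOn E Set.univ

/-- The simple graph on `V` whose edges are the (non-loop) pairs of `E`. -/
def toSimpleGraph (E : Set (Sym2 V)) : SimpleGraph V where
  Adj u v := u ≠ v ∧ s(u, v) ∈ E
  symm := ⟨fun u v h => ⟨h.1.symm, by rw [Sym2.eq_swap]; exact h.2⟩⟩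
  loopless := ⟨fun v h => h.1 rfl⟩

/-! Percolation only gets easier when colours are dropped or their edge sets enlarged: by
induction on the number of rounds, each cluster of the process for `E` lies inside a cluster of
the process for `E'` as soon as every colour of `E'` contains a colour of `E`, while the clusters
for `E'` keep partitioning `V`. Comparing instead with the reachability classes of
`toSimpleGraph (E i)`, which the process never merges (an edge of colour `i` between two classes
would join them), shows that every colour graph of a percolating `E` is connected. -/

section

variable {s : ℕ} {E : Fin r → Set (Sym2 V)} {E' : Fin s → Set (Sym2 V)}
  {P Q : Set (Set V)}

def Refines (P Q : Set (Set V)) : Prop :=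
  ∀ C ∈ P, ∃ D ∈ Q, C ⊆ D

lemma refines_refl (P : Set (Set V)) : Refines P P :=
  fun C hC => ⟨C, hC, subset_rfl⟩

instance : Std.Symm (AuxRel E P) where
  symm _ _ := fun ⟨hC, hD, hne, h⟩ => ⟨hD, hC, hne.symm, fun i =>
    let ⟨u, hu, v, hv, he⟩ := h i
    ⟨v, hv, u, hu, Sym2.eq_swap ▸ he⟩⟩

lemma mem_of_reflTransGen_auxRel {C D : Set V}
    (h : Relation.ReflTransGen (AuxRel E P) C D) (hC : C ∈ P) : D ∈ P := by
  induction h with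
  | refl => exact hC
  | tail _ hstep _ => exact hstep.2.1

lemma setOf_reflTransGen_auxRel_eq {C C' : Set V}
    (h : Relation.ReflTransGen (AuxRel E P) C C') :
    {D | Relation.ReflTransGen (AuxRel E P) C D}
      = {D | Relation.ReflTransGen (AuxRel E P) C' D} :=
  Set.ext fun _ => ⟨(Std.Symm.symm _ _ h).trans, h.trans⟩

lemma isPartition_singletons : Setoid.IsPartition {S : Set V | ∃ v ∈ Set.univ, S = {v}} := by
  refine ⟨fun ⟨v, _, hv⟩ => Set.singleton_ne_empty v hv.symm, fun a => ?_⟩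
  refine ⟨{a}, ⟨⟨a, trivial, rfl⟩, rfl⟩, ?_⟩
  rintro _ ⟨⟨v, _, rfl⟩, ha⟩
  rw [Set.mem_singleton_iff.1 ha]

lemma isPartition_nextPart (hP : Setoid.IsPartition P) :
    Setoid.IsPartition (nextPart E P) := by
  refine ⟨?_, fun a => ?_⟩
  · rintro ⟨C, hC, hempty⟩
    have hCempty : C = ∅ := Set.subset_empty_iff.1 <|
      hempty ▸ Set.subset_sUnion_of_mem Relation.ReflTransGen.refl
    exact hP.1 (hCempty ▸ hC)
  · obtain ⟨C, ⟨hC, haC⟩, -⟩ := hP.2 a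
    refine ⟨_, ⟨⟨C, hC, rfl⟩, C, .refl, haC⟩, ?_⟩
    rintro _ ⟨⟨C', hC', rfl⟩, D, hD, haD⟩
    obtain rfl : D = C :=
      Setoid.eq_of_mem_eqv_class hP.2 (mem_of_reflTransGen_auxRel hD hC') haD hC haC
    rw [setOf_reflTransGen_auxRel_eq hD]

lemma eq_singleton_univ_of_isPartition (hP : Setoid.IsPartition P)
    (huniv : Set.univ ∈ P) : P = {Set.univ} := by
  refine Set.eq_singleton_iff_unique_mem.2 ⟨huniv, fun C hC => ?_⟩
  obtain ⟨a, ha⟩ := Set.nonempty_iff_ne_empty.2 (fun h => hP.1 (h ▸ hC))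
  exact Setoid.eq_of_mem_eqv_class hP.2 hC ha huniv trivial

lemma Refines.exists_reflTransGen (hE : ∀ k, ∃ i, E i ⊆ E' k) (hPQ : Refines P Q)
    {C C' D : Set V} (hD : D ∈ Q) (hCD : C ⊆ D)
    (h : Relation.ReflTransGen (AuxRel E P) C C') :
    ∃ D' ∈ Q, C' ⊆ D' ∧ Relation.ReflTransGen (AuxRel E' Q) D D' := by
  induction h with
  | refl => exact ⟨D, hD, hCD, .refl⟩
  | @tail C₁ C₂ _ hstep ih =>
    obtain ⟨D₁, hD₁, hC₁D₁, hDD₁⟩ := ih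
    obtain ⟨D₂, hD₂, hC₂D₂⟩ := hPQ C₂ hstep.2.1
    by_cases hD₁₂ : D₁ = D₂
    · exact ⟨D₂, hD₂, hC₂D₂, hD₁₂ ▸ hDD₁⟩
    refine ⟨D₂, hD₂, hC₂D₂, hDD₁.tail ⟨hD₁, hD₂, hD₁₂, fun k => ?_⟩⟩
    obtain ⟨i, hi⟩ := hE k
    obtain ⟨u, hu, v, hv, he⟩ := hstep.2.2.2 i
    exact ⟨u, hC₁D₁ hu, v, hC₂D₂ hv, hi he⟩

lemma refines_nextPart (hE : ∀ k, ∃ i, E i ⊆ E' k) (hPQ : Refines P Q) :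
    Refines (nextPart E P) (nextPart E' Q) := by
  rintro _ ⟨C, hC, rfl⟩
  obtain ⟨D, hD, hCD⟩ := hPQ C hC
  refine ⟨_, ⟨D, hD, rfl⟩, Set.sUnion_subset fun C' hC' => ?_⟩
  obtain ⟨D', -, hC'D', hDD'⟩ := hPQ.exists_reflTransGen hE hD hCD hC'
  exact hC'D'.trans (Set.subset_sUnion_of_mem hDD')

lemma refines_iterate_nextPart (hE : ∀ k, ∃ i, E i ⊆ E' k) (hPQ : Refines P Q) (t : ℕ) :
    Refines ((nextPart E)^[t] P) ((nextPart E')^[t] Q) := by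
  induction t with
  | zero => exact hPQ
  | succ t ih =>
    rw [Function.iterate_succ_apply', Function.iterate_succ_apply']
    exact refines_nextPart hE ih

lemma isPartition_iterate_nextPart (hP : Setoid.IsPartition P) (t : ℕ) :
    Setoid.IsPartition ((nextPart E)^[t] P) := by
  induction t with
  | zero => exact hP
  | succ t ih =>
    rw [Function.iterate_succ_apply']
    exact isPartition_nextPart ih

theorem Percolates.mono (h : Percolates E) (hE : ∀ k, ∃ i, E i ⊆ E' k) :
    Percolates E' := by
  obtain ⟨t, ht⟩ := h
  have href := refines_iterate_nextPart hE
    (refines_refl {S : Set V | ∃ v ∈ Set.univ, S = {v}}) t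
  rw [ht] at href
  obtain ⟨T, hT, huniv⟩ := href _ rfl
  refine ⟨t, eq_singleton_univ_of_isPartition
    (isPartition_iterate_nextPart isPartition_singletons t) ?_⟩
  rwa [Set.univ_subset_iff.1 huniv] at hT

end

lemma reachable_toSimpleGraph_of_mem {F : Set (Sym2 V)} {u v : V} (h : s(u, v) ∈ F) :
    (toSimpleGraph F).Reachable u v := by
  by_cases huv : u = v
  · exact huv ▸ .refl u
  · exact SimpleGraph.Adj.reachable ⟨huv, h⟩

lemma nextPart_reachableSetoid_classes (E : Fin r → Set (Sym2 V)) (i : Fin r) :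
    nextPart E (toSimpleGraph (E i)).reachableSetoid.classes
      = (toSimpleGraph (E i)).reachableSetoid.classes := by
  have hnot : ∀ C D, ¬ AuxRel E (toSimpleGraph (E i)).reachableSetoid.classes C D := by
    rintro _ _ ⟨⟨x, rfl⟩, ⟨y, rfl⟩, hne, h⟩
    obtain ⟨u, hux, v, hvy, he⟩ := h i
    refine hne (Set.ext fun w => ⟨fun hwx => ?_, fun hwy => ?_⟩)
    · exact (hwx.trans hux.symm).trans
        ((reachable_toSimpleGraph_of_mem he).trans hvy)
    · exact (hwy.trans hvy.symm).trans
        ((reachable_toSimpleGraph_of_mem he).symm.trans hux)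
  ext S
  simp only [nextPart, Relation.reflTransGen_iff_eq (hnot _), Set.ofPred_eq_eq_singleton,
    Set.sUnion_singleton]
  exact ⟨fun ⟨C, hC, hS⟩ => hS ▸ hC, fun hS => ⟨S, hS, rfl⟩⟩

theorem Percolates.connected {E : Fin r → Set (Sym2 V)} (h : Percolates E) (i : Fin r) :
    (toSimpleGraph (E i)).Connected := by
  obtain ⟨t, ht⟩ := h
  have href : Refines {S : Set V | ∃ v ∈ Set.univ, S = {v}}
      (toSimpleGraph (E i)).reachableSetoid.classes := by
    rintro _ ⟨v, -, rfl⟩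
    exact ⟨_, Setoid.mem_classes _ v, Set.singleton_subset_iff.2 (SimpleGraph.Reachable.refl v)⟩
  have href_t := refines_iterate_nextPart (E' := E) (fun k => ⟨k, subset_rfl⟩) href t
  rw [ht, Function.iterate_fixed (nextPart_reachableSetoid_classes E i)] at href_t
  obtain ⟨_, ⟨y, rfl⟩, huniv⟩ := href_t _ rfl
  have hreach : ∀ u, (toSimpleGraph (E i)).Reachable u y := fun u => huniv trivial
  have : Nonempty V := ⟨y⟩
  exact ⟨fun u v => (hreach u).trans (hreach v).symm⟩

/-- If an `r`-fold graph percolates then, for every nonempty subset of the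
colours (listed by a strictly monotone map `φ : Fin s → Fin r` with `s ≥ 1`), the induced
`s`-fold graph percolates; in particular every colour graph is connected. -/
theorem percolates_colour_subset (n r : ℕ) (E : Fin r → Set (Sym2 (Fin n)))
    (hperc : Percolates E) :
    (∀ s : ℕ, 1 ≤ s → ∀ φ : Fin s → Fin r, StrictMono φ →
        Percolates (fun k : Fin s => E (φ k))) ∧
      ∀ i : Fin r, (toSimpleGraph (E i)).Connected :=
  ⟨fun _ _ φ _ => hperc.mono fun k => ⟨φ k, subset_rfl⟩, hperc.connected⟩

end Jigsaw
end
end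

section
/- Percolation is a monotone increasing property: if the r-fold graph G = (V, E_1, …, E_r) percolates and E_i ⊆ E_i' ⊆ {pairs of V} for every i ∈ {1, …, r}, then the r-fold graph G' = (V, E_1', …, E_r') also percolates. -/
open MeasureTheory Filter

noncomputable section

namespace Jigsaw

variable {V : Type*} {r : ℕ}

/-- Invariant relating the partition of the process on `E` with that of the process
on the larger edge sets `E'`. -/
structure Inv (P Q : Set (Set V)) : Prop where
  coverP : ⋃₀ P = Set.univ
  coverQ : ⋃₀ Q = Set.univ
  neP : ∀ C ∈ P, C.Nonempty
  neQ : ∀ D ∈ Q, D.Nonempty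
  sat : ∀ D ∈ Q, ∀ C ∈ P, (C ∩ D).Nonempty → C ⊆ D

lemma auxRel_symm {E : Fin r → Set (Sym2 V)} {P : Set (Set V)} {C C' : Set V}
    (h : AuxRel E P C C') : AuxRel E P C' C := by
  obtain ⟨hC, hC', hne, hedge⟩ := h
  refine ⟨hC', hC, hne.symm, fun i => ?_⟩
  obtain ⟨u, hu, v, hv, he⟩ := hedge i
  exact ⟨v, hv, u, hu, by rwa [Sym2.eq_swap]⟩

lemma rtg_mem {E : Fin r → Set (Sym2 V)} {P : Set (Set V)} {C C' : Set V} (hC : C ∈ P)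
    (h : Relation.ReflTransGen (AuxRel E P) C C') : C' ∈ P := by
  induction h with
  | refl => exact hC
  | tail _ hstep _ => exact hstep.2.1

lemma sUnion_nextPart (E : Fin r → Set (Sym2 V)) (P : Set (Set V)) :
    ⋃₀ nextPart E P = ⋃₀ P := by
  apply subset_antisymm
  · rintro x ⟨S, ⟨C, hC, rfl⟩, hx⟩
    obtain ⟨C', hC', hxC'⟩ := hx
    exact ⟨C', rtg_mem hC hC', hxC'⟩
  · rintro x ⟨C, hC, hx⟩
    exact ⟨_, ⟨C, hC, rfl⟩, C, Relation.ReflTransGen.refl, hx⟩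

lemma step_good {E E' : Fin r → Set (Sym2 V)} {P Q : Set (Set V)} (hinv : Inv P Q)
    (hsub : ∀ i, E i ⊆ E' i) {D : Set V} (hD : D ∈ Q) {C1 C2 : Set V}
    (h : AuxRel E P C1 C2)
    (h1 : C1 ⊆ ⋃₀ {D' | Relation.ReflTransGen (AuxRel E' Q) D D'}) :
    C2 ⊆ ⋃₀ {D' | Relation.ReflTransGen (AuxRel E' Q) D D'} := by
  obtain ⟨hC1, hC2, hne, hedge⟩ := h
  obtain ⟨x, hx⟩ := hinv.neP C1 hC1
  obtain ⟨D1, hD1, hxD1⟩ := h1 hx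
  have hD1Q : D1 ∈ Q := rtg_mem hD hD1
  have hC1D1 : C1 ⊆ D1 := hinv.sat D1 hD1Q C1 hC1 ⟨x, hx, hxD1⟩
  obtain ⟨y, hy⟩ := hinv.neP C2 hC2
  have hyQ : y ∈ ⋃₀ Q := by rw [hinv.coverQ]; trivial
  obtain ⟨Dy, hDyQ, hyDy⟩ := hyQ
  have hC2Dy : C2 ⊆ Dy := hinv.sat Dy hDyQ C2 hC2 ⟨y, hy, hyDy⟩
  by_cases hDeq : D1 = Dy
  · exact fun z hz => ⟨D1, hD1, hDeq ▸ hC2Dy hz⟩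
  · have haux : AuxRel E' Q D1 Dy := by
      refine ⟨hD1Q, hDyQ, hDeq, fun i => ?_⟩
      obtain ⟨u, hu, v, hv, he⟩ := hedge i
      exact ⟨u, hC1D1 hu, v, hC2Dy hv, hsub i he⟩
    exact fun z hz => ⟨Dy, hD1.tail haux, hC2Dy hz⟩

lemma rtg_good {E E' : Fin r → Set (Sym2 V)} {P Q : Set (Set V)} (hinv : Inv P Q)
    (hsub : ∀ i, E i ⊆ E' i) {D : Set V} (hD : D ∈ Q) {C C' : Set V}
    (h : Relation.ReflTransGen (AuxRel E P) C C') :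
    (C ⊆ ⋃₀ {D' | Relation.ReflTransGen (AuxRel E' Q) D D'}) ↔
    (C' ⊆ ⋃₀ {D' | Relation.ReflTransGen (AuxRel E' Q) D D'}) := by
  induction h with
  | refl => exact Iff.rfl
  | tail _ hstep ih =>
    exact ih.trans ⟨step_good hinv hsub hD hstep,
      step_good hinv hsub hD (auxRel_symm hstep)⟩

lemma inv_step {E E' : Fin r → Set (Sym2 V)} {P Q : Set (Set V)}
    (hsub : ∀ i, E i ⊆ E' i) (hinv : Inv P Q) :
    Inv (nextPart E P) (nextPart E' Q) := by
  constructor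
  · rw [sUnion_nextPart, hinv.coverP]
  · rw [sUnion_nextPart, hinv.coverQ]
  · rintro S ⟨C, hC, rfl⟩
    obtain ⟨x, hx⟩ := hinv.neP C hC
    exact ⟨x, C, Relation.ReflTransGen.refl, hx⟩
  · rintro S ⟨D, hD, rfl⟩
    obtain ⟨x, hx⟩ := hinv.neQ D hD
    exact ⟨x, D, Relation.ReflTransGen.refl, hx⟩
  · rintro S ⟨D, hD, rfl⟩ T ⟨C, hC, rfl⟩ ⟨x, hxT, hxS⟩
    obtain ⟨C'', hC'', hxC''⟩ := hxT
    obtain ⟨D'', hD'', hxD''⟩ := hxS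
    have hC''P : C'' ∈ P := rtg_mem hC hC''
    have hD''Q : D'' ∈ Q := rtg_mem hD hD''
    have hgood : C'' ⊆ ⋃₀ {D' | Relation.ReflTransGen (AuxRel E' Q) D D'} :=
      fun z hz => ⟨D'', hD'', hinv.sat D'' hD''Q C'' hC''P ⟨x, hxC'', hxD''⟩ hz⟩
    have hCgood := (rtg_good hinv hsub hD hC'').mpr hgood
    rintro z ⟨C', hC', hzC'⟩
    exact (rtg_good hinv hsub hD hC').mp hCgood hzC'

lemma inv_init : Inv {S : Set V | ∃ v ∈ (Set.univ : Set V), S = {v}}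
    {S : Set V | ∃ v ∈ (Set.univ : Set V), S = {v}} := by
  have hcover : ⋃₀ {S : Set V | ∃ v ∈ (Set.univ : Set V), S = {v}} = Set.univ := by
    apply Set.eq_univ_of_forall
    intro x
    exact ⟨{x}, ⟨x, trivial, rfl⟩, rfl⟩
  have hne : ∀ C ∈ {S : Set V | ∃ v ∈ (Set.univ : Set V), S = {v}}, C.Nonempty := by
    rintro C ⟨v, -, rfl⟩
    exact ⟨v, rfl⟩
  refine ⟨hcover, hcover, hne, hne, ?_⟩
  rintro D ⟨v, -, rfl⟩ C ⟨w, -, rfl⟩ ⟨x, hx1, hx2⟩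
  have h1 : x = w := hx1
  have h2 : x = v := hx2
  subst h1
  rw [h2]

/-- Percolation is a monotone increasing property: adding edges (in any colour)
to a percolating `r`-fold graph preserves percolation. -/
theorem percolates_mono (n r : ℕ) (E E' : Fin r → Set (Sym2 (Fin n)))
    (hsub : ∀ i, E i ⊆ E' i) (hperc : Percolates E) :
    Percolates E' := by
  obtain ⟨t, ht⟩ := hperc
  refine ⟨t, ?_⟩
  set P0 : Set (Set (Fin n)) := {S | ∃ v ∈ (Set.univ : Set (Fin n)), S = {v}} with hP0
  have key : ∀ s : ℕ, Inv ((nextPart E)^[s] P0) ((nextPart E')^[s] P0) := by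
    intro s
    induction s with
    | zero => exact inv_init
    | succ k ih =>
      rw [Function.iterate_succ_apply', Function.iterate_succ_apply']
      exact inv_step hsub ih
  have hinv := key t
  rw [ht] at hinv
  have hune : (Set.univ : Set (Fin n)).Nonempty := hinv.neP _ rfl
  obtain ⟨x, hx⟩ := hune
  have hxQ : x ∈ ⋃₀ ((nextPart E')^[t] P0) := by rw [hinv.coverQ]; trivial
  obtain ⟨D, hDQ, hxD⟩ := hxQ
  have huniv : ∀ D' ∈ (nextPart E')^[t] P0, D' = Set.univ := by
    intro D' hD'
    have hDne := hinv.neQ D' hD'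
    have hsubu : (Set.univ : Set (Fin n)) ⊆ D' :=
      hinv.sat D' hD' Set.univ rfl (by simpa using hDne)
    exact Set.eq_univ_of_univ_subset hsubu
  ext S
  simp only [Set.mem_singleton_iff]
  constructor
  · exact fun h => huniv S h
  · rintro rfl
    have := huniv D hDQ
    rwa [this] at hDQ

end Jigsaw
end
end

section
/- Let r ≥ 2 be an integer and C ≥ 1 a constant. There exists N such that for every natural number n ≥ N the following holds: if real numbers 0 ≤ p_1 ≤ p_2 ≤ … ≤ p_r ≤ 1 satisfy p_1 ≥ C (ln n)/n and p_1 p_2 ⋯ p_i ≥ C/(n (ln n)^{i−1}) for every 2 ≤ i ≤ r, then there exist real numbers 0 ≤ p_1' ≤ p_2' ≤ … ≤ p_r' ≤ 1 such that p_i' ≤ p_i for every i, p_1' ≥ C (ln n)/n, p_1' p_2' ⋯ p_i' ≥ C/(n (ln n)^{i−1}) for every 2 ≤ i ≤ r, and moreover p_1' p_2' ⋯ p_r' = C/(n (ln n)^{r−1}). -/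
/-!
Cap all the probabilities at a common level `t`, i.e. take `q i = min (p i) t`. The product
`f t = ∏ min (p i) t` is continuous in `t`. At `t = C log n / n` it is at most `t ^ r`, which is
below the target `C / (n (log n)^(r-1))` once `C (log n)^3 ≤ n`; at `t = 1 / log n` an induction
on `i` using the hypotheses shows it is at least the target. The intermediate value theorem gives
a level `t` in between with `f t` equal to the target. The intermediate lower bounds then come for
free: the factors `q (i+1), …, q r` are at most `t ≤ 1 / log n`, so the first `i` factors carry
at least `(log n)^(r-i)` times the target.
-/

open Finset Filter Real

lemma eventually_mul_log_pow_le (K : ℝ) (m : ℕ) :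
    ∀ᶠ x : ℝ in atTop, K * log x ^ m ≤ x := by
  filter_upwards [(isLittleO_pow_log_id_atTop.const_mul_left K).bound one_pos,
    eventually_ge_atTop 0] with x hx hx0
  rw [one_mul, norm_of_nonneg (show 0 ≤ id x from hx0)] at hx
  exact (le_abs_self _).trans hx

lemma pow_le_div_pow {a L : ℝ} {r : ℕ} (hr : 2 ≤ r) (hL : 1 ≤ L) (ha : 0 ≤ a)
    (haL : a * L ^ 2 ≤ 1) : a ^ r ≤ a / L ^ r := by
  obtain ⟨k, rfl⟩ := Nat.exists_eq_add_of_le' hr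
  rw [le_div_iff₀ (by positivity)]
  calc a ^ (k + 2) * L ^ (k + 2) = a * ((a * L) ^ (k + 1) * L) := by ring
    _ ≤ a * ((a * L) ^ (k + 1) * L ^ (k + 1)) := by
        gcongr
        exact le_self_pow₀ hL (by omega)
    _ = a * (a * L ^ 2) ^ (k + 1) := by ring
    _ ≤ a * 1 := by gcongr; exact pow_le_one₀ (by positivity) haL
    _ = a := mul_one a

lemma le_prod_Icc_min {p b : ℕ → ℝ} {t : ℝ} {r : ℕ} (ht : 0 ≤ t)
    (hp : MonotoneOn p (Set.Icc 1 r))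
    (hb : ∀ i, 1 ≤ i → i ≤ r → b i ≤ ∏ j ∈ Icc 1 i, p j)
    (hb₁ : b 1 ≤ t) (hbt : ∀ i, 1 ≤ i → i < r → b (i + 1) ≤ b i * t) :
    ∀ i, 1 ≤ i → i ≤ r → b i ≤ ∏ j ∈ Icc 1 i, min (p j) t := by
  intro i hi
  induction i, hi using Nat.le_induction with
  | base =>
    intro hr
    rw [Icc_self, prod_singleton]
    exact le_min (by simpa using hb 1 le_rfl hr) hb₁
  | succ i hi ih =>
    intro hir
    by_cases hpt : p (i + 1) ≤ t
    -- by monotonicity, none of the first `i + 1` factors is capped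
    · calc b (i + 1) ≤ ∏ j ∈ Icc 1 (i + 1), p j := hb (i + 1) (by omega) hir
        _ = ∏ j ∈ Icc 1 (i + 1), min (p j) t := by
          refine prod_congr rfl fun j hj => (min_eq_left ?_).symm
          have hj := mem_Icc.mp hj
          exact (hp ⟨hj.1, by omega⟩ ⟨by omega, hir⟩ hj.2).trans hpt
    · rw [prod_Icc_succ_top (by omega), min_eq_right (le_of_not_ge hpt)]
      exact (hbt i hi (by omega)).trans (mul_le_mul_of_nonneg_right (ih (by omega)) ht)

lemma prod_Icc_le_mul_pow {q : ℕ → ℝ} {t : ℝ} {i r : ℕ} (hir : i ≤ r)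
    (hq₀ : ∀ l ∈ Icc 1 r, 0 ≤ q l) (hqt : ∀ l ∈ Icc 1 r, q l ≤ t) :
    ∏ l ∈ Icc 1 r, q l ≤ (∏ l ∈ Icc 1 i, q l) * t ^ (r - i) := by
  have hsub : Ioc i r ⊆ Icc 1 r := fun l hl => by
    simp only [mem_Ioc, mem_Icc] at hl ⊢; omega
  rw [show ∀ k, Icc 1 k = Ioc 0 k from Icc_add_one_left_eq_Ioc 0,
    ← prod_Ioc_consecutive _ (Nat.zero_le i) hir, ← Nat.card_Ioc i r, ← prod_const]
  refine mul_le_mul_of_nonneg_left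
    (prod_le_prod (fun l hl => hq₀ l (hsub hl)) fun l hl => hqt l (hsub hl)) ?_
  exact prod_nonneg fun l hl => hq₀ l <| by
    simp only [mem_Ioc, mem_Icc] at hl ⊢; omega

/-- The hypotheses on `p` in the theorem, with `L` standing for `log n`. -/
structure Supercritical (r : ℕ) (C n L : ℝ) (p : ℕ → ℝ) : Prop where
  nonneg_and_le_one : ∀ i, 1 ≤ i → i ≤ r → 0 ≤ p i ∧ p i ≤ 1
  monotone : ∀ i j, 1 ≤ i → i ≤ j → j ≤ r → p i ≤ p j
  le_first : C * L / n ≤ p 1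
  le_prod : ∀ i, 2 ≤ i → i ≤ r → C / (n * L ^ (i - 1)) ≤ ∏ j ∈ Icc 1 i, p j

namespace Supercritical

variable {r : ℕ} {C n L : ℝ} {p : ℕ → ℝ}

lemma monotoneOn (hp : Supercritical r C n L p) : MonotoneOn p (Set.Icc 1 r) :=
  fun i hi j hj hij => hp.monotone i j hi.1 hij hj.2

lemma nonneg (hp : Supercritical r C n L p) {j : ℕ} (hj : j ∈ Icc 1 r) : 0 ≤ p j :=
  (hp.nonneg_and_le_one j (mem_Icc.mp hj).1 (mem_Icc.mp hj).2).1

lemma prod_min_le (hp : Supercritical r C n L p) (hr : 2 ≤ r) (hC : 0 ≤ C) (hL : 1 ≤ L)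
    (hn : 0 < n) (hCn : C * L ^ 3 ≤ n) :
    ∏ j ∈ Icc 1 r, min (p j) (C * L / n) ≤ C / (n * L ^ (r - 1)) := calc
  _ ≤ ∏ j ∈ Icc 1 r, C * L / n :=
      Finset.prod_le_prod (fun j hj => le_min (hp.nonneg hj) (by positivity))
        fun j _ => min_le_right _ _
  _ = (C * L / n) ^ r := by rw [prod_const, Nat.card_Icc, Nat.add_sub_cancel]
  _ ≤ C * L / n / L ^ r := pow_le_div_pow hr hL (by positivity) <| by
      rw [div_mul_eq_mul_div, div_le_one hn]
      nlinarith
  _ = C / (n * L ^ (r - 1)) := by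
      rw [← Nat.sub_add_cancel (by omega : 1 ≤ r), pow_succ, Nat.add_sub_cancel]
      field_simp

lemma le_prod_min_inv (hp : Supercritical r C n L p) (hr : 1 ≤ r) (hC : 0 ≤ C) (hL : 1 ≤ L)
    (hn : 0 < n) (hCn : C * L ≤ n) :
    C / (n * L ^ (r - 1)) ≤ ∏ j ∈ Icc 1 r, min (p j) L⁻¹ := by
  have hL₀ : 0 < L := one_pos.trans_le hL
  refine le_prod_Icc_min (b := fun i => C / (n * L ^ (i - 1))) (by positivity) hp.monotoneOn
    (fun i hi hir => ?_) ?_ (fun i hi _ => ?_) r hr le_rfl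
  · rcases (by omega : i = 1 ∨ 2 ≤ i) with rfl | hi₂
    · simp only [Nat.sub_self, pow_zero, mul_one, Icc_self, prod_singleton]
      exact (div_le_div_of_nonneg_right (le_mul_of_one_le_right hC hL) hn.le).trans hp.le_first
    · exact hp.le_prod i hi₂ hir
  · simp only [Nat.sub_self, pow_zero, mul_one]
    rw [div_le_iff₀ hn, inv_mul_eq_div, le_div_iff₀ hL₀]
    linarith
  · refine le_of_eq ?_
    rw [Nat.add_sub_cancel, ← Nat.sub_add_cancel hi, pow_succ, Nat.add_sub_cancel]
    field_simp

lemma min_of_prod_eq (hp : Supercritical r C n L p) {t : ℝ} (hC : 0 ≤ C) (hL : 1 ≤ L)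
    (hn : 0 < n) (ht : C * L / n ≤ t) (htL : t ≤ L⁻¹)
    (hpt : ∏ j ∈ Icc 1 r, min (p j) t = C / (n * L ^ (r - 1))) :
    Supercritical r C n L fun j => min (p j) t := by
  have hq₀ : ∀ j ∈ Icc 1 r, 0 ≤ min (p j) t := fun j hj =>
    le_min (hp.nonneg hj) ((by positivity : 0 ≤ C * L / n).trans ht)
  refine ⟨fun i hi hir => ⟨hq₀ i (mem_Icc.mpr ⟨hi, hir⟩), ?_⟩,
    fun i j hi hij hjr => min_le_min_right t (hp.monotone i j hi hij hjr),
    le_min hp.le_first ht, fun i hi hir => ?_⟩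
  · exact (min_le_left _ _).trans (hp.nonneg_and_le_one i hi hir).2
  · have key := hpt.symm.trans_le <|
      prod_Icc_le_mul_pow hir hq₀ fun j _ => (min_le_right _ _).trans htL
    rw [inv_pow, ← div_eq_mul_inv, le_div_iff₀ (by positivity)] at key
    calc C / (n * L ^ (i - 1)) = C / (n * L ^ (r - 1)) * L ^ (r - i) := by
          rw [← Nat.sub_add_cancel (by omega : i - 1 ≤ r - 1), pow_add,
            show r - 1 - (i - 1) = r - i by omega]
          field_simp
      _ ≤ _ := key

theorem exists_le_prod_eq (hp : Supercritical r C n L p) (hr : 2 ≤ r) (hC : 0 < C)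
    (hL : 1 ≤ L) (hCn : C * L ^ 3 ≤ n) :
    ∃ q, Supercritical r C n L q ∧ (∀ i, 1 ≤ i → i ≤ r → q i ≤ p i) ∧
      ∏ j ∈ Icc 1 r, q j = C / (n * L ^ (r - 1)) := by
  have hn : 0 < n := lt_of_lt_of_le (by positivity) hCn
  have hCL : C * L ^ 2 ≤ n := (mul_le_mul_of_nonneg_left
    (pow_le_pow_right₀ hL (by norm_num)) hC.le).trans hCn
  have hlow : C * L / n ≤ L⁻¹ := by
    rw [div_le_iff₀ hn, inv_mul_eq_div, le_div_iff₀ (one_pos.trans_le hL)]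
    nlinarith
  obtain ⟨t, ⟨htlow, ht⟩, hpt⟩ := intermediate_value_Icc hlow
    (by fun_prop : ContinuousOn (fun t => ∏ j ∈ Icc 1 r, min (p j) t) _)
    ⟨hp.prod_min_le hr hC.le hL hn hCn,
      hp.le_prod_min_inv (by omega) hC.le hL hn (by nlinarith)⟩
  exact ⟨_, hp.min_of_prod_eq hC.le hL hn htlow ht hpt, fun i _ _ => min_le_left _ _, hpt⟩

end Supercritical

/-- For `r ≥ 2`, `C ≥ 1` and `n` large enough, any probabilities
`0 ≤ p 1 ≤ ⋯ ≤ p r ≤ 1` satisfying the supercritical conditions can be decreased to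
probabilities `q` still satisfying the supercritical conditions but with
`q 1 * ⋯ * q r = C / (n (ln n)^(r-1))`. -/
theorem exists_reduced_probabilities (r : ℕ) (hr : 2 ≤ r) (C : ℝ) (hC : 1 ≤ C) :
    ∃ N : ℕ, ∀ n : ℕ, N ≤ n →
      ∀ p : ℕ → ℝ,
        (∀ i, 1 ≤ i → i ≤ r → 0 ≤ p i ∧ p i ≤ 1) →
        (∀ i j, 1 ≤ i → i ≤ j → j ≤ r → p i ≤ p j) →
        C * Real.log n / n ≤ p 1 →
        (∀ i, 2 ≤ i → i ≤ r →
          C / (n * (Real.log n) ^ (i - 1)) ≤ ∏ j ∈ Finset.Icc 1 i, p j) →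
        ∃ q : ℕ → ℝ,
          (∀ i, 1 ≤ i → i ≤ r → 0 ≤ q i ∧ q i ≤ 1) ∧
          (∀ i j, 1 ≤ i → i ≤ j → j ≤ r → q i ≤ q j) ∧
          (∀ i, 1 ≤ i → i ≤ r → q i ≤ p i) ∧
          C * Real.log n / n ≤ q 1 ∧
          (∀ i, 2 ≤ i → i ≤ r →
            C / (n * (Real.log n) ^ (i - 1)) ≤ ∏ j ∈ Finset.Icc 1 i, q j) ∧
          ∏ j ∈ Finset.Icc 1 r, q j = C / (n * (Real.log n) ^ (r - 1)) := by
  obtain ⟨N, hN⟩ := eventually_atTop.mp <| tendsto_natCast_atTop_atTop.eventually <|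
    (tendsto_log_atTop.eventually_ge_atTop 1).and (eventually_mul_log_pow_le C 3)
  refine ⟨N, fun n hn p hp₀₁ hpmono hp₁ hpprod => ?_⟩
  obtain ⟨q, hq, hqp, hqprod⟩ :=
    Supercritical.exists_le_prod_eq ⟨hp₀₁, hpmono, hp₁, hpprod⟩ hr (one_pos.trans_le hC)
      (hN n hn).1 (hN n hn).2
  exact ⟨q, hq.nonneg_and_le_one, hq.monotone, hqp, hq.le_first, hq.le_prod, hqprod⟩
end

section
/- Let r ≥ 2 be an integer, t ≥ 1 a natural number, and 0 ≤ p_1 ≤ p_2 ≤ … ≤ p_r ≤ 1 real numbers such that 1 − p_2 t/3 ≥ 1/2. Define i_t := max{ i ∈ {2, …, r} : 1 − p_i t/3 ≥ 1/2 } and P_i := p_1 p_2 ⋯ p_i. Then (p_1/3) · ∏_{j=2}^{r} (1 − (1 − p_j/3)^t) ≥ (1/5)^{r−1} · (P_{i_t}/3^{i_t}) · t^{i_t−1}. -/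
/-!
By Bernoulli's inequality, `(1 - x) ^ t * (1 + t x) ≤ (1 - x ^ 2) ^ t ≤ 1`, so
`1 - (1 - x) ^ t ≥ t x / (1 + t x)`, which is at least `t x / 5` when `t x ≤ 4` and at
least `1 / 5` when `t x ≥ 1 / 4`. Take `x = p j / 3`: colours `2 ≤ j ≤ i_t` are in the first
regime because `p j ≤ p i_t`, colours `j > i_t` in the second by maximality of `i_t`.
Multiplying these bounds gives the claim.
-/

open Finset

theorem one_sub_pow_mul_one_add_mul_le_one {x : ℝ} (hx0 : 0 ≤ x) (hx1 : x ≤ 1) (t : ℕ) :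
    (1 - x) ^ t * (1 + t * x) ≤ 1 :=
  calc (1 - x) ^ t * (1 + t * x) ≤ (1 - x) ^ t * (1 + x) ^ t :=
        mul_le_mul_of_nonneg_left (one_add_mul_le_pow (by linarith) t)
          (pow_nonneg (by linarith) t)
    _ = (1 - x ^ 2) ^ t := by rw [← mul_pow]; ring
    _ ≤ 1 := pow_le_one₀ (by nlinarith) (by nlinarith)

theorem mul_div_one_add_mul_le_one_sub_one_sub_pow {x : ℝ} (hx0 : 0 ≤ x) (hx1 : x ≤ 1)
    (t : ℕ) :
    t * x / (1 + t * x) ≤ 1 - (1 - x) ^ t := by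
  rw [div_le_iff₀ (by positivity)]
  linarith [one_sub_pow_mul_one_add_mul_le_one hx0 hx1 t]

theorem mul_div_five_le_one_sub_one_sub_pow {x : ℝ} (hx0 : 0 ≤ x) (hx1 : x ≤ 1) {t : ℕ}
    (hxt : t * x ≤ 4) : t * x / 5 ≤ 1 - (1 - x) ^ t :=
  calc (t * x / 5 : ℝ) ≤ t * x / (1 + t * x) :=
        div_le_div_of_nonneg_left (by positivity) (by positivity) (by linarith)
    _ ≤ 1 - (1 - x) ^ t := mul_div_one_add_mul_le_one_sub_one_sub_pow hx0 hx1 t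

theorem one_div_five_le_one_sub_one_sub_pow {x : ℝ} (hx0 : 0 ≤ x) (hx1 : x ≤ 1) {t : ℕ}
    (hxt : 1 / 4 ≤ t * x) : 1 / 5 ≤ 1 - (1 - x) ^ t :=
  calc (1 / 5 : ℝ) ≤ t * x / (1 + t * x) := by rw [le_div_iff₀ (by positivity)]; linarith
    _ ≤ 1 - (1 - x) ^ t := mul_div_one_add_mul_le_one_sub_one_sub_pow hx0 hx1 t

theorem prod_Ioc_mul_pow_le_prod_Ioc {f g : ℕ → ℝ} {c : ℝ} {a b n : ℕ} (hab : a ≤ b)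
    (hbn : b ≤ n) (hg : ∀ j ∈ Ioc a b, 0 ≤ g j ∧ g j ≤ f j) (hc0 : 0 ≤ c)
    (hc : ∀ j ∈ Ioc b n, c ≤ f j) :
    (∏ j ∈ Ioc a b, g j) * c ^ (n - b) ≤ ∏ j ∈ Ioc a n, f j := by
  rw [← prod_Ioc_consecutive f hab hbn, ← Nat.card_Ioc b n, ← prod_const]
  exact mul_le_mul (prod_le_prod (fun j hj => (hg j hj).1) (fun j hj => (hg j hj).2))
    (prod_le_prod (fun _ _ => hc0) hc) (prod_nonneg fun _ _ => hc0)
    (prod_nonneg fun j hj => (hg j hj).1.trans (hg j hj).2)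

theorem mul_pow_le_prod_one_sub_one_sub_pow {x : ℕ → ℝ} {t a k n : ℕ} (hak : a ≤ k)
    (hkn : k ≤ n) (hx : ∀ j ∈ Ioc a n, 0 ≤ x j ∧ x j ≤ 1)
    (hsmall : ∀ j ∈ Ioc a k, t * x j ≤ 4) (hlarge : ∀ j ∈ Ioc k n, 1 / 4 ≤ t * x j) :
    (t ^ (k - a) * ∏ j ∈ Ioc a k, x j) / 5 ^ (k - a) * (1 / 5) ^ (n - k) ≤
      ∏ j ∈ Ioc a n, (1 - (1 - x j) ^ t) := by
  calc _ = (∏ j ∈ Ioc a k, (t * x j / 5)) * (1 / 5) ^ (n - k) := by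
        rw [prod_div_distrib, prod_mul_distrib, prod_const, prod_const, Nat.card_Ioc]
    _ ≤ _ := prod_Ioc_mul_pow_le_prod_Ioc hak hkn (fun j hj => ?_) (by norm_num) (fun j hj => ?_)
  · obtain ⟨hx0, hx1⟩ := hx j (Ioc_subset_Ioc_right hkn hj)
    exact ⟨by positivity, mul_div_five_le_one_sub_one_sub_pow hx0 hx1 (hsmall j hj)⟩
  · obtain ⟨hx0, hx1⟩ := hx j (Ioc_subset_Ioc_left hak hj)
    exact one_div_five_le_one_sub_one_sub_pow hx0 hx1 (hlarge j hj)

theorem one_step_success_lower_bound_general (r : ℕ) (hr : 2 ≤ r) (t : ℕ)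
    (p : ℕ → ℝ)
    (hp01 : ∀ i, 1 ≤ i → i ≤ r → 0 ≤ p i ∧ p i ≤ 1)
    (hmono : ∀ i j, 1 ≤ i → i ≤ j → j ≤ r → p i ≤ p j)
    (h2 : (1 / 2 : ℝ) ≤ 1 - p 2 * t / 3)
    (it : ℕ)
    (hit : it = sSup {i : ℕ | 2 ≤ i ∧ i ≤ r ∧ (1 / 2 : ℝ) ≤ 1 - p i * t / 3}) :
    (1 / 5 : ℝ) ^ (r - 1) * ((∏ j ∈ Finset.Icc 1 it, p j) / 3 ^ it) * (t : ℝ) ^ (it - 1) ≤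
      p 1 / 3 * ∏ j ∈ Finset.Icc 2 r, (1 - (1 - p j / 3) ^ t) := by
  set S := {i : ℕ | 2 ≤ i ∧ i ≤ r ∧ (1 / 2 : ℝ) ≤ 1 - p i * t / 3}
  have hbdd : BddAbove S := ⟨r, fun i hi => hi.2.1⟩
  obtain ⟨hit2, hitr, hpit⟩ : it ∈ S := hit ▸ Nat.sSup_mem ⟨2, le_rfl, hr, h2⟩ hbdd
  have hprod := mul_pow_le_prod_one_sub_one_sub_pow (x := fun j => p j / 3) (t := t)
    (by omega : 1 ≤ it) hitr
    (fun j hj => by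
      have hpj := hp01 j (mem_Ioc.mp hj).1.le (mem_Ioc.mp hj).2
      constructor <;> linarith)
    (fun j hj => by
      obtain ⟨hj1, hjit⟩ := mem_Ioc.mp hj
      have hpj : p j ≤ p it := hmono j it hj1.le hjit hitr
      nlinarith [Nat.cast_nonneg (α := ℝ) t])
    (fun j hj => by
      obtain ⟨hitj, hjr⟩ := mem_Ioc.mp hj
      have hjS : j ∉ S := fun h => (le_csSup hbdd h).not_gt (hit ▸ hitj)
      have hpj : 1 - p j * t / 3 < 1 / 2 := not_le.mp fun h => hjS ⟨by omega, hjr, h⟩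
      linarith)
  rw [show Icc 2 r = Ioc 1 r from Icc_add_one_left_eq_Ioc 1 r]
  have hp1 := (hp01 1 le_rfl (by omega)).1
  calc (1 / 5 : ℝ) ^ (r - 1) * ((∏ j ∈ Icc 1 it, p j) / 3 ^ it) * (t : ℝ) ^ (it - 1)
      = p 1 / 3 *
          ((t ^ (it - 1) * ∏ j ∈ Ioc 1 it, p j / 3) / 5 ^ (it - 1) * (1 / 5) ^ (r - it)) := by
        rw [Icc_eq_cons_Ioc (by omega), prod_cons, prod_div_distrib, prod_const, Nat.card_Ioc,
          show r - 1 = (it - 1) + (r - it) by omega, pow_add, one_div_pow,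
          show it = (it - 1) + 1 by omega, pow_succ, Nat.add_sub_cancel]
        field_simp
    _ ≤ _ := mul_le_mul_of_nonneg_left hprod (by positivity)

/-- Lower bound for the one-step success probability of the 1-by-1 algorithm:
with `i_t` the largest colour `i ∈ {2, …, r}` with `1 - p i * t / 3 ≥ 1/2`, we have
`(p 1 / 3) ∏_{j=2}^{r} (1 - (1 - p j / 3)^t) ≥ (1/5)^(r-1) (P_{i_t} / 3^{i_t}) t^{i_t - 1}`. -/
theorem one_step_success_lower_bound (r : ℕ) (hr : 2 ≤ r) (t : ℕ) (ht : 1 ≤ t)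
    (p : ℕ → ℝ)
    (hp01 : ∀ i, 1 ≤ i → i ≤ r → 0 ≤ p i ∧ p i ≤ 1)
    (hmono : ∀ i j, 1 ≤ i → i ≤ j → j ≤ r → p i ≤ p j)
    (h2 : (1 / 2 : ℝ) ≤ 1 - p 2 * t / 3)
    (it : ℕ)
    (hit : it = sSup {i : ℕ | 2 ≤ i ∧ i ≤ r ∧ (1 / 2 : ℝ) ≤ 1 - p i * t / 3}) :
    (1 / 5 : ℝ) ^ (r - 1) * ((∏ j ∈ Finset.Icc 1 it, p j) / 3 ^ it) * (t : ℝ) ^ (it - 1) ≤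
      p 1 / 3 * ∏ j ∈ Finset.Icc 2 r, (1 - (1 - p j / 3) ^ t) :=
  one_step_success_lower_bound_general r hr t p hp01 hmono h2 it hit
end

section
/- Let r ≥ 2 be a fixed integer. There exists N such that for every natural number n ≥ N the following holds: for every real p with 0 ≤ p ≤ 1 and p·(ln n)^{1+1/r} ≤ 3/(4e²), and k := ⌈n/(4 (ln n)^{1+1/r})⌉, one has C(n, k) · (p/3)^{k} ≤ e^{−√n}, where C(n, k) is the binomial coefficient n choose k. -/
open Real Filter

/-!
Since `k ≥ n / (4 (ln n)^(1+1/r))`, the hypothesis on `p` gives `e² n (p/3) ≤ k`, and the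
bound `C(n,k) ≤ (e n / k)^k` turns `C(n,k) (p/3)^k` into at most `e^(-k)`. As `(ln n)^(1+1/r)`
is eventually at most `√n / 4`, we also have `k ≥ √n`.
-/

theorem Nat.choose_le_exp_one_mul_div_pow (n k : ℕ) :
    (n.choose k : ℝ) ≤ (exp 1 * n / k) ^ k := by
  rcases k.eq_zero_or_pos with rfl | hk
  · simp
  have hk' : (0 : ℝ) < k := by exact_mod_cast hk
  have hfact : (k : ℝ) ^ k ≤ exp 1 ^ k * k.factorial := by
    rw [← exp_nat_mul, mul_one, ← div_le_iff₀ (by positivity)]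
    exact pow_div_factorial_le_exp _ hk'.le k
  calc (n.choose k : ℝ) ≤ (n : ℝ) ^ k / k.factorial := Nat.choose_le_pow_div k n
    _ ≤ (n : ℝ) ^ k * exp 1 ^ k / k ^ k := by
        rw [div_le_div_iff₀ (by positivity) (by positivity)]
        nlinarith [pow_nonneg (Nat.cast_nonneg (α := ℝ) n) k]
    _ = (exp 1 * n / k) ^ k := by rw [div_pow, mul_pow, mul_comm]

theorem Nat.choose_mul_pow_le_exp_neg {n k : ℕ} {q : ℝ} (hq : 0 ≤ q)
    (h : exp 2 * n * q ≤ k) : (n.choose k : ℝ) * q ^ k ≤ exp (-k) := by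
  have hbase : exp 1 * n * q / k ≤ exp (-1) := by
    rcases k.eq_zero_or_pos with rfl | hk
    · simpa using (exp_pos (-1)).le
    rw [div_le_iff₀ (by exact_mod_cast hk), ← mul_le_mul_iff_right₀ (exp_pos 1)]
    calc exp 1 * (exp 1 * n * q) = exp 2 * n * q := by
          rw [show (2 : ℝ) = 1 + 1 by norm_num, exp_add]; ring
      _ ≤ k := h
      _ = exp 1 * (exp (-1) * k) := by rw [← mul_assoc, ← exp_add]; simp
  calc (n.choose k : ℝ) * q ^ k ≤ (exp 1 * n / k) ^ k * q ^ k :=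
        mul_le_mul_of_nonneg_right (Nat.choose_le_exp_one_mul_div_pow n k) (by positivity)
    _ = (exp 1 * n * q / k) ^ k := by rw [← mul_pow, div_mul_eq_mul_div]
    _ ≤ exp (-1) ^ k := pow_le_pow_left₀ (by positivity) hbase k
    _ = exp (-k) := by rw [← exp_nat_mul]; ring_nf

theorem eventually_mul_log_rpow_le_sqrt (c a : ℝ) :
    ∀ᶠ x : ℝ in atTop, c * log x ^ a ≤ √x := by
  filter_upwards [((isLittleO_log_rpow_rpow_atTop a one_half_pos).const_mul_left c).bound
    one_pos, eventually_ge_atTop 0] with x hx hx0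
  rw [one_mul, norm_eq_abs, norm_eq_abs, abs_of_nonneg (rpow_nonneg hx0 _), ← sqrt_eq_rpow] at hx
  exact (le_abs_self _).trans hx

theorem choose_ceil_mul_pow_le_exp_neg_sqrt {n : ℕ} {L p : ℝ} (hL : 0 < L)
    (hLn : 4 * L ≤ √n) (hp : 0 ≤ p) (hpL : p * L ≤ 3 / (4 * exp 2)) :
    (n.choose ⌈n / (4 * L)⌉₊ : ℝ) * (p / 3) ^ ⌈n / (4 * L)⌉₊ ≤ exp (-√n) := by
  set k := ⌈n / (4 * L)⌉₊
  have hnk : (n : ℝ) ≤ 4 * L * k := (div_le_iff₀' (by positivity)).mp (Nat.le_ceil _)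
  have hpLe : exp 2 * (p * L) ≤ 3 / 4 := by
    rw [le_div_iff₀ (by positivity)] at hpL; linarith
  have hkey : exp 2 * n * (p / 3) ≤ k :=
    calc exp 2 * n * (p / 3) ≤ exp 2 * (4 * L * k) * (p / 3) := by gcongr
      _ = 4 / 3 * k * (exp 2 * (p * L)) := by ring
      _ ≤ 4 / 3 * k * (3 / 4) := by gcongr
      _ = k := by ring
  have hsqrt : √n ≤ k :=
    calc √n ≤ n / (4 * L) := by
          rw [le_div_iff₀ (by positivity)]
          calc √n * (4 * L) ≤ √n * √n := by gcongr
            _ = n := mul_self_sqrt n.cast_nonneg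
      _ ≤ k := Nat.le_ceil _
  calc _ ≤ exp (-k) := Nat.choose_mul_pow_le_exp_neg (by positivity) hkey
    _ ≤ exp (-√n) := exp_le_exp.mpr (neg_le_neg hsqrt)

theorem choose_times_pow_le_general (r : ℕ) :
    ∃ N : ℕ, ∀ n : ℕ, N ≤ n →
      ∀ p : ℝ, 0 ≤ p → p ≤ 1 →
        p * Real.log n ^ ((1 : ℝ) + 1 / r) ≤ 3 / (4 * Real.exp 2) →
        ∀ k : ℕ, k = ⌈(n : ℝ) / (4 * Real.log n ^ ((1 : ℝ) + 1 / r))⌉₊ →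
          (n.choose k : ℝ) * (p / 3) ^ k ≤ Real.exp (-Real.sqrt n) := by
  obtain ⟨N, hN⟩ := eventually_atTop.mp <| tendsto_natCast_atTop_atTop.eventually <|
    eventually_mul_log_rpow_le_sqrt 4 (1 + 1 / r)
  refine ⟨max N 2, fun n hn p hp _ hpL k hk => hk ▸ ?_⟩
  have hn1 : (1 : ℝ) < n := by exact_mod_cast (le_of_max_le_right hn : 2 ≤ n)
  exact choose_ceil_mul_pow_le_exp_neg_sqrt (rpow_pos_of_pos (log_pos hn1) _)
    (hN n (le_of_max_le_left hn)) hp hpL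

/-- For fixed `r ≥ 2` and `n` large: if `0 ≤ p ≤ 1` with
`p (ln n)^(1+1/r) ≤ 3/(4e²)` and `k = ⌈n / (4 (ln n)^(1+1/r))⌉`, then
`(n choose k) (p/3)^k ≤ e^(-√n)`. -/
theorem choose_times_pow_le (r : ℕ) (hr : 2 ≤ r) :
    ∃ N : ℕ, ∀ n : ℕ, N ≤ n →
      ∀ p : ℝ, 0 ≤ p → p ≤ 1 →
        p * Real.log n ^ ((1 : ℝ) + 1 / r) ≤ 3 / (4 * Real.exp 2) →
        ∀ k : ℕ, k = ⌈(n : ℝ) / (4 * Real.log n ^ ((1 : ℝ) + 1 / r))⌉₊ →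
          (n.choose k : ℝ) * (p / 3) ^ k ≤ Real.exp (-Real.sqrt n) :=
  choose_times_pow_le_general r
end

section
/- Let r ≥ 2 be an integer, n ≥ 3 a natural number, and c > 0 a real number with (1/16)^{r} · c/(ln n) ≤ 1. Set t_0 := (ln n)/c and t_1 := (ln n)^{1+1/r}, and for each integer t with t_0 ≤ t ≤ t_1 let e_t be any integer with 1 ≤ e_t ≤ r − 1. Then ∏_{t ∈ ℤ, t_0 ≤ t ≤ t_1} (1 − exp(−(1/16)^{r} (c t/ln n)^{e_t})) ≥ n^{−2^{8r+2}/c}. -/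
/-!
Write `α = 16⁻ʳ` and `β = α c / ln n`. For an integer `t ≥ t₀` we have `y = c t / ln n ≥ 1`, so
the exponent `x = α y^(e t)` satisfies `x ≥ α y = β t` and `x ≥ α`. Since `log (1 - u) ≥ -u / (1 - u)`
and `1 - e^(-x) ≥ α / (1 + α)`, each factor is at least `exp (-(1 + α) / α · e^(-β t))`. Summing the
geometric series `∑_{t ≥ 1} e^(-β t) = 1 / (e^β - 1) ≤ 1 / β` bounds the product below by
`exp (-(1 + α) / (α β)) ≥ exp (-4 / (α β)) = n^(-2^(8r+2)/c)`.
-/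

open Real Finset

lemma div_one_add_le_one_sub_exp_neg {a : ℝ} (ha : 0 ≤ a) : a / (1 + a) ≤ 1 - exp (-a) := by
  calc a / (1 + a) = 1 - (1 + a)⁻¹ := by field_simp; ring
    _ ≤ 1 - (exp a)⁻¹ := by gcongr; linarith [add_one_le_exp a]
    _ = 1 - exp (-a) := by rw [exp_neg]

lemma exp_neg_mul_le_one_sub {u k : ℝ} (hu0 : 0 ≤ u) (hu1 : u < 1) (hk : 1 ≤ k * (1 - u)) :
    exp (-(k * u)) ≤ 1 - u := by
  have hpos : 0 < 1 - u := by linarith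
  have hlog : 1 - (1 - u)⁻¹ ≤ log (1 - u) := one_sub_inv_le_log_of_pos hpos
  have hquot : u / (1 - u) ≤ k * u := by rw [div_le_iff₀ hpos]; nlinarith
  calc exp (-(k * u)) ≤ exp (log (1 - u)) := by
        gcongr
        calc -(k * u) ≤ -(u / (1 - u)) := by linarith
          _ = 1 - (1 - u)⁻¹ := by field_simp; ring
          _ ≤ log (1 - u) := hlog
    _ = 1 - u := exp_log hpos

lemma exp_neg_mul_exp_neg_le_one_sub_exp_neg {a x : ℝ} (ha : 0 < a) (hx : a ≤ x) :
    exp (-((1 + a) / a * exp (-x))) ≤ 1 - exp (-x) := by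
  refine exp_neg_mul_le_one_sub (exp_nonneg _) (exp_lt_one_iff.mpr (by linarith)) ?_
  have hgap : a / (1 + a) ≤ 1 - exp (-x) :=
    (div_one_add_le_one_sub_exp_neg ha.le).trans (by gcongr)
  calc (1 : ℝ) = (1 + a) / a * (a / (1 + a)) := by field_simp
    _ ≤ (1 + a) / a * (1 - exp (-x)) := by gcongr

lemma sum_Icc_exp_neg_mul_le {β : ℝ} (hβ : 0 < β) {a : ℤ} (ha : 1 ≤ a) (b : ℤ) :
    ∑ t ∈ Icc a b, exp (-(β * t)) ≤ 1 / β := by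
  have hq : exp (-β) < 1 := exp_lt_one_iff.mpr (by linarith)
  have hsub : Icc a b ⊆ (Ico 1 (b.toNat + 1)).map (Nat.castEmbedding : ℕ ↪ ℤ) := by
    intro t ht
    rw [mem_Icc] at ht
    exact mem_map.mpr ⟨t.toNat, mem_Ico.mpr ⟨by omega, by omega⟩, by simp; omega⟩
  calc ∑ t ∈ Icc a b, exp (-(β * t))
      ≤ ∑ t ∈ (Ico 1 (b.toNat + 1)).map (Nat.castEmbedding : ℕ ↪ ℤ), exp (-(β * t)) :=
        sum_le_sum_of_subset_of_nonneg hsub fun _ _ _ => exp_nonneg _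
    _ = ∑ k ∈ Ico 1 (b.toNat + 1), exp (-β) ^ k := by
        rw [sum_map]
        refine sum_congr rfl fun k _ => ?_
        rw [← exp_nat_mul]
        simp [mul_comm]
    _ ≤ exp (-β) ^ 1 / (1 - exp (-β)) := geom_sum_Ico_le_of_lt_one (exp_nonneg _) hq
    _ = 1 / (exp β - 1) := by
        have : exp β - 1 ≠ 0 := by linarith [add_one_le_exp β]
        rw [pow_one, exp_neg]
        field_simp
    _ ≤ 1 / β := one_div_le_one_div_of_le hβ (by linarith [add_one_le_exp β])

lemma exp_neg_mul_exp_neg_le_one_sub_exp_neg_mul_pow {α c L t : ℝ} {e : ℕ} (hα : 0 < α)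
    (hc : 0 < c) (hL : 0 < L) (ht : L / c ≤ t) (he : 1 ≤ e) :
    exp (-((1 + α) / α * exp (-(α * c / L * t)))) ≤ 1 - exp (-α * (c * t / L) ^ e) := by
  have hy : 1 ≤ c * t / L := by
    rw [le_div_iff₀ hL, one_mul]
    rwa [div_le_iff₀ hc, mul_comm] at ht
  have hpow : α * (c * t / L) ≤ α * (c * t / L) ^ e := by
    gcongr
    exact le_self_pow₀ hy (by omega)
  have hαy : α ≤ α * (c * t / L) := le_mul_of_one_le_right hα.le hy
  calc exp (-((1 + α) / α * exp (-(α * c / L * t))))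
      = exp (-((1 + α) / α * exp (-(α * (c * t / L))))) := by ring_nf
    _ ≤ exp (-((1 + α) / α * exp (-(α * (c * t / L) ^ e)))) := by gcongr
    _ ≤ 1 - exp (-(α * (c * t / L) ^ e)) :=
        exp_neg_mul_exp_neg_le_one_sub_exp_neg hα (hαy.trans hpow)
    _ = 1 - exp (-α * (c * t / L) ^ e) := by rw [neg_mul]

lemma two_pow_eight_mul_add_two (r : ℕ) : (2 : ℝ) ^ (8 * r + 2) = 4 / ((1 / 16) ^ r) ^ 2 := by
  rw [← pow_mul, one_div_pow, div_div_eq_mul_div, div_one, pow_add, pow_mul,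
    show (16 : ℝ) = 2 ^ 4 by norm_num, ← pow_mul, ← pow_mul]
  ring

theorem product_lower_bound_t0_t1_general (r : ℕ) (n : ℕ) (hn : 3 ≤ n)
    (c : ℝ) (hc : 0 < c)
    (t₀ t₁ : ℝ) (ht₀ : t₀ = Real.log n / c)
    (e : ℤ → ℕ)
    (he : ∀ t : ℤ, t₀ ≤ (t : ℝ) → (t : ℝ) ≤ t₁ → 1 ≤ e t ∧ e t ≤ r - 1) :
    (n : ℝ) ^ (-(2 : ℝ) ^ (8 * r + 2) / c) ≤
      ∏ t ∈ Finset.Icc ⌈t₀⌉ ⌊t₁⌋,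
        (1 - Real.exp (-(1 / 16 : ℝ) ^ r * (c * (t : ℝ) / Real.log n) ^ (e t))) := by
  have hn1 : (1 : ℝ) < n := by exact_mod_cast (by omega : 1 < n)
  set L := log n
  set α : ℝ := (1 / 16) ^ r
  set β := α * c / L
  have hL : 0 < L := log_pos hn1
  have hα : 0 < α := by positivity
  have hα1 : α ≤ 1 := pow_le_one₀ (by norm_num) (by norm_num)
  have hβ : 0 < β := by positivity
  have hstart : 1 ≤ ⌈t₀⌉ := Int.one_le_ceil_iff.mpr (by rw [ht₀]; positivity)
  have hfactor : ∀ t ∈ Icc ⌈t₀⌉ ⌊t₁⌋,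
      exp (-((1 + α) / α * exp (-(β * t)))) ≤ 1 - exp (-α * (c * t / L) ^ e t) := by
    intro t ht
    obtain ⟨hlo, hhi⟩ := mem_Icc.mp ht
    have hlo' : t₀ ≤ t := Int.ceil_le.mp hlo
    exact exp_neg_mul_exp_neg_le_one_sub_exp_neg_mul_pow hα hc hL (ht₀ ▸ hlo')
      (he t hlo' (Int.le_floor.mp hhi)).1
  calc (n : ℝ) ^ (-(2 : ℝ) ^ (8 * r + 2) / c) = exp (-(4 / α * (1 / β))) := by
        rw [rpow_def_of_pos (by positivity), two_pow_eight_mul_add_two]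
        congr 1
        simp only [β, α, L]
        field_simp
    _ ≤ exp (-((1 + α) / α * (1 / β))) := by gcongr; linarith
    _ ≤ exp (-((1 + α) / α * ∑ t ∈ Icc ⌈t₀⌉ ⌊t₁⌋, exp (-(β * t)))) := by
        gcongr
        exact sum_Icc_exp_neg_mul_le hβ hstart _
    _ = ∏ t ∈ Icc ⌈t₀⌉ ⌊t₁⌋, exp (-((1 + α) / α * exp (-(β * t)))) := by
        rw [mul_sum, ← sum_neg_distrib, exp_sum]
    _ ≤ _ := prod_le_prod (fun _ _ => exp_nonneg _) hfactor

/-- With `t₀ = (ln n)/c`, `t₁ = (ln n)^(1+1/r)` and exponents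
`1 ≤ e t ≤ r - 1` for each integer `t ∈ [t₀, t₁]`, we have
`∏_{t₀ ≤ t ≤ t₁} (1 - exp(-(1/16)^r (c t / ln n)^(e t))) ≥ n^(-2^(8r+2)/c)`. -/
theorem product_lower_bound_t0_t1 (r : ℕ) (hr : 2 ≤ r) (n : ℕ) (hn : 3 ≤ n)
    (c : ℝ) (hc : 0 < c)
    (hsmall : (1 / 16 : ℝ) ^ r * c / Real.log n ≤ 1)
    (t₀ t₁ : ℝ) (ht₀ : t₀ = Real.log n / c) (ht₁ : t₁ = Real.log n ^ ((1 : ℝ) + 1 / r))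
    (e : ℤ → ℕ)
    (he : ∀ t : ℤ, t₀ ≤ (t : ℝ) → (t : ℝ) ≤ t₁ → 1 ≤ e t ∧ e t ≤ r - 1) :
    (n : ℝ) ^ (-(2 : ℝ) ^ (8 * r + 2) / c) ≤
      ∏ t ∈ Finset.Icc ⌈t₀⌉ ⌊t₁⌋,
        (1 - Real.exp (-(1 / 16 : ℝ) ^ r * (c * (t : ℝ) / Real.log n) ^ (e t))) :=
  product_lower_bound_t0_t1_general r n hn c hc t₀ t₁ ht₀ e he
end

section
/- Let r ≥ 2 be an integer, n ≥ 3 a natural number, and C := 2^{8r²}. Suppose 0 ≤ p_1 ≤ p_2 ≤ … ≤ p_r ≤ 1 are real numbers with p_1 ≥ C (ln n)/n and p_1 p_2 ⋯ p_i ≥ C/(n (ln n)^{i−1}) for every 2 ≤ i ≤ r. Let x be a real number with (ln n)^{1+1/r} ≤ x ≤ n/2^{r+2}, set p_0 := 0, and let j := max{ j ∈ {0, 1, …, r} : p_j x ≤ 6 }. Then (n/2) · (∏_{k=1}^{j} p_k x/12) · (1/2)^{r−j} ≥ 2x. -/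
/-!
For `j = 0` the claim is the upper bound `x ≤ n / 2^(r+2)`. For `j ≥ 1`
the hypotheses give `p₁ ⋯ p_j ≥ C / (n (ln n)^(j-1))`, so the right-hand side is at least
`2x · (C / (4 · 12^j · 2^(r-j))) · (x / ln n)^(j-1)`; both factors are at least `1`, since
`x ≥ ln n` and `12^j 2^(r-j) · 4 ≤ 2^(4r+2) ≤ 2^(8r²)`.
-/

lemma one_le_log_of_three_le {n : ℕ} (hn : 3 ≤ n) : 1 ≤ Real.log n := by
  have hn' : (3 : ℝ) ≤ n := by exact_mod_cast hn
  rw [Real.le_log_iff_exp_le (by linarith)]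
  linarith [Real.exp_one_lt_d9]

lemma twelve_pow_mul_two_pow_sub_mul_four_le {r j : ℕ} (hr : 1 ≤ r) (hj : j ≤ r) :
    (12 : ℝ) ^ j * 2 ^ (r - j) * 4 ≤ 2 ^ (8 * r ^ 2) :=
  calc (12 : ℝ) ^ j * 2 ^ (r - j) * 4
      ≤ 16 ^ j * 16 ^ (r - j) * 4 := by gcongr <;> norm_num
    _ = 2 ^ (4 * r + 2) := by
        rw [← pow_add, Nat.add_sub_cancel' hj, pow_add, pow_mul]; norm_num
    _ ≤ 2 ^ (8 * r ^ 2) := pow_le_pow_right₀ (by norm_num) (by nlinarith)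

lemma div_mul_log_pow_le_prod_Icc {r m n : ℕ} {C : ℝ} {p : ℕ → ℝ} (hC : 0 ≤ C) (hn : 3 ≤ n)
    (hm : m + 1 ≤ r) (h1 : C * Real.log n / n ≤ p 1)
    (hprod : ∀ i, 2 ≤ i → i ≤ r →
      C / (n * (Real.log n) ^ (i - 1)) ≤ ∏ k ∈ Finset.Icc 1 i, p k) :
    C / (n * Real.log n ^ m) ≤ ∏ k ∈ Finset.Icc 1 (m + 1), p k := by
  rcases m.eq_zero_or_pos with rfl | hm0
  · have : C / n ≤ C * Real.log n / n := by
      gcongr; exact le_mul_of_one_le_right hC (one_le_log_of_three_le hn)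
    simpa using this.trans h1
  · simpa using hprod (m + 1) (by omega) hm

lemma two_mul_le_of_prod_lower_bound {n C L x P : ℝ} {m k : ℕ} (hn : 0 < n) (hL : 0 < L)
    (hLx : L ≤ x) (hC : 12 ^ (m + 1) * 2 ^ k * 4 ≤ C) (hP : C / (n * L ^ m) ≤ P) :
    2 * x ≤ n / 2 * (P * (x / 12) ^ (m + 1)) * (1 / 2) ^ k := by
  have hx : 0 < x := hL.trans_le hLx
  have hgrowth : 1 ≤ C / (12 ^ (m + 1) * 2 ^ k * 4) * (x / L) ^ m :=
    one_le_mul_of_one_le_of_one_le ((one_le_div (by positivity)).mpr hC)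
      (one_le_pow₀ ((one_le_div hL).mpr hLx))
  calc 2 * x ≤ C / (12 ^ (m + 1) * 2 ^ k * 4) * (x / L) ^ m * (2 * x) :=
        le_mul_of_one_le_left (by positivity) hgrowth
    _ = n / 2 * (C / (n * L ^ m) * (x / 12) ^ (m + 1)) * (1 / 2) ^ k := by
        simp only [div_pow, one_div, inv_pow]; field_simp; ring
    _ ≤ n / 2 * (P * (x / 12) ^ (m + 1)) * (1 / 2) ^ k := by gcongr

theorem doubling_expected_growth_general (r : ℕ) (hr : 2 ≤ r) (n : ℕ) (hn : 3 ≤ n)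
    (C : ℝ) (hC : C = 2 ^ (8 * r ^ 2)) (p : ℕ → ℝ)
    (h1 : C * Real.log n / n ≤ p 1)
    (hprod : ∀ i, 2 ≤ i → i ≤ r →
      C / (n * (Real.log n) ^ (i - 1)) ≤ ∏ k ∈ Finset.Icc 1 i, p k)
    (x : ℝ)
    (hx1 : Real.log n ^ ((1 : ℝ) + 1 / r) ≤ x)
    (hx2 : x ≤ (n : ℝ) / 2 ^ (r + 2))
    (j : ℕ) (hj : j = sSup {j : ℕ | j ≤ r ∧ p j * x ≤ 6}) :
    2 * x ≤ (n : ℝ) / 2 * (∏ k ∈ Finset.Icc 1 j, p k * x / 12) * (1 / 2) ^ (r - j) := by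
  have hjr : j ≤ r := hj ▸ csSup_le' fun i hi => hi.1
  have hlog := one_le_log_of_three_le hn
  have hLx : Real.log n ≤ x :=
    (Real.self_le_rpow_of_one_le hlog (by simp)).trans hx1
  simp_rw [mul_div_assoc, ← Finset.prod_mul_pow_card, Nat.card_Icc, Nat.add_sub_cancel]
  rcases j with _ | m
  · have hsplit : (n : ℝ) / 2 * (1 / 2) ^ r = 2 * (n / 2 ^ (r + 2)) := by
      simp only [one_div, inv_pow]; field_simp; ring
    rw [Finset.Icc_eq_empty (by norm_num), Finset.prod_empty, pow_zero, mul_one, mul_one,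
      Nat.sub_zero, hsplit]
    linarith
  · exact two_mul_le_of_prod_lower_bound (by positivity) (by linarith) hLx
      (hC ▸ twelve_pow_mul_two_pow_sub_mul_four_le (by omega) hjr)
      (div_mul_log_pow_le_prod_Icc (by rw [hC]; positivity) hn hjr h1 hprod)

/-- Expected-growth estimate in the doubling stage: with `C = 2^(8r²)`,
supercritical probabilities, `(ln n)^(1+1/r) ≤ x ≤ n/2^(r+2)`, `p 0 = 0` and
`j` the largest index in `{0, …, r}` with `p j * x ≤ 6`, we have
`(n/2) ∏_{k=1}^{j} (p k x / 12) (1/2)^(r-j) ≥ 2x`. -/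
theorem doubling_expected_growth (r : ℕ) (hr : 2 ≤ r) (n : ℕ) (hn : 3 ≤ n)
    (C : ℝ) (hC : C = 2 ^ (8 * r ^ 2)) (p : ℕ → ℝ)
    (hp0 : p 0 = 0)
    (hp01 : ∀ i, 1 ≤ i → i ≤ r → 0 ≤ p i ∧ p i ≤ 1)
    (hmono : ∀ i j, 1 ≤ i → i ≤ j → j ≤ r → p i ≤ p j)
    (h1 : C * Real.log n / n ≤ p 1)
    (hprod : ∀ i, 2 ≤ i → i ≤ r →
      C / (n * (Real.log n) ^ (i - 1)) ≤ ∏ k ∈ Finset.Icc 1 i, p k)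
    (x : ℝ)
    (hx1 : Real.log n ^ ((1 : ℝ) + 1 / r) ≤ x)
    (hx2 : x ≤ (n : ℝ) / 2 ^ (r + 2))
    (j : ℕ) (hj : j = sSup {j : ℕ | j ≤ r ∧ p j * x ≤ 6}) :
    2 * x ≤ (n : ℝ) / 2 * (∏ k ∈ Finset.Icc 1 j, p k * x / 12) * (1 / 2) ^ (r - j) :=
  doubling_expected_growth_general r hr n hn C hC p h1 hprod x hx1 hx2 j hj
end

section
/- Let r ≥ 2 be an integer, n ≥ 1 a natural number, and suppose 0 ≤ p_1 ≤ p_2 ≤ … ≤ p_r ≤ 1 are real numbers with p_1 ≥ 2^{8r²} (ln n)/n. Let W ⊆ {1, …, n} be a fixed subset with |W| ≥ n/2^{r+2}, and let G = (V, E_1, …, E_r) be the r-fold binomial random graph G(n, p_1/3, …, p_r/3). Then with probability at least 1 − r/n, for every vertex v ∈ V \ W and every colour i ∈ {1, …, r} there exists w ∈ W with {v, w} ∈ E_i. -/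
open MeasureTheory Filter

noncomputable section

namespace Jigsaw

variable {V : Type*} {r : ℕ}

/-- Bernoulli measure on `Bool` with success probability `p` (truncated into `[0,1]`). -/
def bernoulliBool (p : ℝ) : Measure Bool :=
  (PMF.bernoulli (min 1 (Real.toNNReal p)) (min_le_left _ _)).toMeasure

instance (p : ℝ) : IsProbabilityMeasure (bernoulliBool p) :=
  PMF.toMeasure.isProbabilityMeasure _

/-- The law of the `r`-fold binomial random graph on vertex set `Fin n`, where each pair
is an edge of colour `i` with probability `p i`, independently. -/
def foldMeasure (n r : ℕ) (p : Fin r → ℝ) : Measure (Fin r → Sym2 (Fin n) → Bool) :=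
  Measure.pi fun i => Measure.pi fun _e => bernoulliBool (p i)

/-- The edge sets of the sample point `ω`. -/
def edges {n r : ℕ} (ω : Fin r → Sym2 (Fin n) → Bool) (i : Fin r) : Set (Sym2 (Fin n)) :=
  {e | ω i e = true}

/-- `Pprod p i n` is the product `p 1 n * p 2 n * ⋯ * p i n`. -/
def Pprod (p : ℕ → ℕ → ℝ) (i n : ℕ) : ℝ := ∏ j ∈ Finset.Icc 1 i, p j n

/-! A fixed vertex `v` has no edge of colour `i` into `W` with probability
`(1 - pᵢ/3)^|W| ≤ exp (-p₁|W|/3)`, and the hypotheses on `p₁` and `|W|` give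
`p₁|W|/3 ≥ 2^(8r² - r - 2) ln n / 3 ≥ 2 ln n`, so this is at most `1/n²`.
A union bound over the `n` vertices and `r` colours leaves failure probability at most `r/n`. -/

lemma ofReal_one_sub_pow_le_exp (x : ℝ) (m : ℕ) :
    ENNReal.ofReal (1 - x) ^ m ≤ ENNReal.ofReal (Real.exp (-(x * m))) :=
  calc ENNReal.ofReal (1 - x) ^ m ≤ ENNReal.ofReal (Real.exp (-x)) ^ m :=
        pow_le_pow_left' (ENNReal.ofReal_le_ofReal (Real.one_sub_le_exp_neg x)) m
    _ = ENNReal.ofReal (Real.exp (-(x * m))) := by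
        rw [← ENNReal.ofReal_pow (Real.exp_nonneg _), ← Real.exp_nat_mul]; ring_nf

lemma exp_neg_le_one_div_sq {x y : ℝ} (hx : 0 < x) (hy : 2 * Real.log x ≤ y) :
    Real.exp (-y) ≤ 1 / x ^ 2 :=
  calc Real.exp (-y) ≤ Real.exp (-Real.log (x ^ 2)) := by
        rw [Real.log_pow]; exact Real.exp_le_exp.2 (by push_cast; linarith)
    _ = 1 / x ^ 2 := by rw [Real.exp_neg, Real.exp_log (by positivity), one_div]

lemma ofReal_one_sub_le_of_measure_compl_le {Ω : Type*} [MeasurableSpace Ω] {μ : Measure Ω}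
    [IsProbabilityMeasure μ] {s : Set Ω} {a : ℝ} (ha : 0 ≤ a) (h : μ sᶜ ≤ ENNReal.ofReal a) :
    ENNReal.ofReal (1 - a) ≤ μ s :=
  calc ENNReal.ofReal (1 - a) = 1 - ENNReal.ofReal a := by
        rw [ENNReal.ofReal_sub _ ha, ENNReal.ofReal_one]
    _ ≤ 1 - μ sᶜ := tsub_le_tsub_left h 1
    _ ≤ μ s := tsub_le_iff_right.2 (measure_univ (μ := μ) ▸ measure_univ_le_add_compl s)

instance {n r : ℕ} (q : Fin r → ℝ) : IsProbabilityMeasure (foldMeasure n r q) := by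
  unfold foldMeasure; infer_instance

lemma bernoulliBool_false {x : ℝ} (hx : 0 ≤ x) :
    bernoulliBool x {false} = ENNReal.ofReal (1 - x) := by
  rw [bernoulliBool, PMF.toMeasure_apply_singleton _ _ (measurableSet_singleton _)]
  change 1 - ((min 1 x.toNNReal : NNReal) : ENNReal) = _
  rw [ENNReal.coe_min, ENNReal.coe_one, ← ENNReal.ofReal.eq_def, ENNReal.ofReal_sub _ hx,
    ENNReal.ofReal_one]
  rcases le_total x 1 with h | h
  · rw [min_eq_right (ENNReal.ofReal_le_one.2 h)]
  · rw [min_eq_left (ENNReal.one_le_ofReal.2 h), tsub_self,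
      tsub_eq_zero_of_le (ENNReal.one_le_ofReal.2 h)]

lemma foldMeasure_forall_notMem_edges {n r : ℕ} (q : Fin r → ℝ) (i : Fin r) (hq : 0 ≤ q i)
    (S : Finset (Sym2 (Fin n))) :
    foldMeasure n r q {ω | ∀ e ∈ S, e ∉ edges ω i} = ENNReal.ofReal (1 - q i) ^ S.card := by
  have hset : {ω | ∀ e ∈ S, e ∉ edges ω i} =
      (fun ω => ω i) ⁻¹' (S : Set (Sym2 (Fin n))).pi fun _ => {false} := by
    ext ω; simp [edges]
  rw [hset, foldMeasure, (measurePreserving_eval _ i).measure_preimage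
    MeasurableSet.of_discrete.nullMeasurableSet, Measure.pi_pi_finset,
    Finset.prod_const, bernoulliBool_false hq]

lemma foldMeasure_forall_notMem_edges_to {n r : ℕ} (q : Fin r → ℝ) (i : Fin r) (hq : 0 ≤ q i)
    (v : Fin n) (W : Finset (Fin n)) :
    foldMeasure n r q {ω | ∀ w ∈ W, s(v, w) ∉ edges ω i} = ENNReal.ofReal (1 - q i) ^ W.card := by
  classical
  have h := foldMeasure_forall_notMem_edges q i hq (W.image fun w => s(v, w))
  rw [Finset.card_image_of_injective _ fun _ _ => Sym2.congr_right.mp] at h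
  simpa only [Finset.forall_mem_image] using h

lemma two_mul_log_le {r n m : ℕ} {p : ℝ} (hr : 1 ≤ r)
    (hp : (2 : ℝ) ^ (8 * r ^ 2) * Real.log n / n ≤ p) (hm : (n : ℝ) / 2 ^ (r + 2) ≤ m) :
    2 * Real.log n ≤ p / 3 * m := by
  rcases n.eq_zero_or_pos with rfl | hn
  · simp only [CharP.cast_eq_zero, Real.log_zero, mul_zero, div_zero] at hp ⊢
    positivity
  have hlog := Real.log_natCast_nonneg n
  have hp0 : 0 ≤ p := le_trans (by positivity) hp
  have hpow : (6 : ℝ) * 2 ^ (r + 2) ≤ 2 ^ (8 * r ^ 2) :=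
    calc (6 : ℝ) * 2 ^ (r + 2) ≤ 2 ^ 3 * 2 ^ (r + 2) := by gcongr; norm_num
      _ = 2 ^ (r + 5) := by ring
      _ ≤ 2 ^ (8 * r ^ 2) := pow_le_pow_right₀ (by norm_num) (by nlinarith)
  calc 2 * Real.log n ≤ 2 ^ (8 * r ^ 2) * Real.log n / (3 * 2 ^ (r + 2)) := by
        rw [le_div_iff₀ (by positivity)]; nlinarith
    _ = 2 ^ (8 * r ^ 2) * Real.log n / n / 3 * (n / 2 ^ (r + 2)) := by field_simp
    _ ≤ p / 3 * m := by gcongr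

lemma foldMeasure_forall_notMem_edges_to_le {r n : ℕ} {p : ℕ → ℝ}
    (hmono : ∀ i j, 1 ≤ i → i ≤ j → j ≤ r → p i ≤ p j)
    (h1 : (2 : ℝ) ^ (8 * r ^ 2) * Real.log n / n ≤ p 1)
    {W : Finset (Fin n)} (hW : (n : ℝ) / 2 ^ (r + 2) ≤ (W.card : ℝ)) (v : Fin n) (i : Fin r) :
    foldMeasure n r (fun k => p (k.1 + 1) / 3) {ω | ∀ w ∈ W, s(v, w) ∉ edges ω i}
      ≤ ENNReal.ofReal (1 / (n : ℝ) ^ 2) := by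
  have hp1 : 0 ≤ p 1 := le_trans (by positivity) h1
  have hpi : p 1 ≤ p (i.1 + 1) := hmono 1 _ le_rfl (by omega) (by omega)
  rw [foldMeasure_forall_notMem_edges_to _ i (by linarith) v W]
  calc ENNReal.ofReal (1 - p (i.1 + 1) / 3) ^ W.card
      ≤ ENNReal.ofReal (1 - p 1 / 3) ^ W.card := by gcongr
    _ ≤ ENNReal.ofReal (Real.exp (-(p 1 / 3 * W.card))) := ofReal_one_sub_pow_le_exp _ _
    _ ≤ ENNReal.ofReal (1 / (n : ℝ) ^ 2) :=
        ENNReal.ofReal_le_ofReal <| exp_neg_le_one_div_sq (by exact_mod_cast v.pos)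
          (two_mul_log_le i.pos h1 hW)

lemma sum_sum_ofReal_one_div_sq (n r : ℕ) :
    ∑ _v : Fin n, ∑ _i : Fin r, ENNReal.ofReal (1 / (n : ℝ) ^ 2) = ENNReal.ofReal (r / n) := by
  simp only [Finset.sum_const, Finset.card_univ, Fintype.card_fin, nsmul_eq_mul]
  rw [← ENNReal.ofReal_natCast, ← ENNReal.ofReal_natCast r,
    ← ENNReal.ofReal_mul (by positivity), ← ENNReal.ofReal_mul (by positivity)]
  congr 1
  rcases eq_or_ne (n : ℝ) 0 with h | h
  · simp [h]
  · field_simp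

theorem part_three_domination_general (r : ℕ) (n : ℕ)
    (p : ℕ → ℝ)
    (hmono : ∀ i j, 1 ≤ i → i ≤ j → j ≤ r → p i ≤ p j)
    (h1 : (2 : ℝ) ^ (8 * r ^ 2) * Real.log n / n ≤ p 1)
    (W : Finset (Fin n)) (hW : (n : ℝ) / 2 ^ (r + 2) ≤ (W.card : ℝ)) :
    ENNReal.ofReal (1 - (r : ℝ) / n) ≤
      foldMeasure n r (fun k => p (k.1 + 1) / 3)
        {ω | ∀ v : Fin n, v ∉ W → ∀ i : Fin r, ∃ w ∈ W, s(v, w) ∈ edges ω i} := by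
  have hcover : {ω | ∀ v : Fin n, v ∉ W → ∀ i : Fin r, ∃ w ∈ W, s(v, w) ∈ edges ω i}ᶜ ⊆
      ⋃ (v : Fin n) (i : Fin r), {ω | ∀ w ∈ W, s(v, w) ∉ edges ω i} := by
    intro ω hω
    simp only [Set.mem_compl_iff, Set.mem_ofPred_eq, not_forall, not_exists, not_and,
      Set.mem_iUnion] at hω ⊢
    obtain ⟨v, -, i, hi⟩ := hω
    exact ⟨v, i, hi⟩
  refine ofReal_one_sub_le_of_measure_compl_le (by positivity) ?_
  calc _ ≤ ∑ v : Fin n, ∑ i : Fin r, foldMeasure n r (fun k => p (k.1 + 1) / 3)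
          {ω | ∀ w ∈ W, s(v, w) ∉ edges ω i} :=
        (measure_mono hcover).trans <| (measure_iUnion_fintype_le _ _).trans <|
          Finset.sum_le_sum fun v _ => measure_iUnion_fintype_le _ _
    _ ≤ ∑ _v : Fin n, ∑ _i : Fin r, ENNReal.ofReal (1 / (n : ℝ) ^ 2) := by
        gcongr with v _ i _
        exact foldMeasure_forall_notMem_edges_to_le hmono h1 hW v i
    _ = ENNReal.ofReal (r / n) := sum_sum_ofReal_one_div_sq n r

/-- Part III of the supercritical argument: if `p 1 ≥ 2^(8r²) ln n / n` and
`W` is a fixed set of at least `n/2^(r+2)` vertices, then in the `r`-fold binomial random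
graph with probabilities `p i / 3`, with probability at least `1 - r/n` every vertex outside
`W` is joined to `W` by an edge of every colour. -/
theorem part_three_domination (r : ℕ) (hr : 2 ≤ r) (n : ℕ) (hn : 1 ≤ n)
    (p : ℕ → ℝ)
    (hp01 : ∀ i, 1 ≤ i → i ≤ r → 0 ≤ p i ∧ p i ≤ 1)
    (hmono : ∀ i j, 1 ≤ i → i ≤ j → j ≤ r → p i ≤ p j)
    (h1 : (2 : ℝ) ^ (8 * r ^ 2) * Real.log n / n ≤ p 1)
    (W : Finset (Fin n)) (hW : (n : ℝ) / 2 ^ (r + 2) ≤ (W.card : ℝ)) :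
    ENNReal.ofReal (1 - (r : ℝ) / n) ≤
      foldMeasure n r (fun k => p (k.1 + 1) / 3)
        {ω | ∀ v : Fin n, v ∉ W → ∀ i : Fin r, ∃ w ∈ W, s(v, w) ∈ edges ω i} :=
  part_three_domination_general r n p hmono h1 W hW

end Jigsaw
end
end
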